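/- Let b₁, b₂, b₃ be a ℚ-basis of ℚ³ and let Λ = Λ_ℚ(ℚ³) be the exterior algebra over ℚ on ℚ³. Let c₁₂, c₁₃, c₂₃, c₁₂₃ be positive integers and suppose the additive subgroup of Λ generated by {1, b₁, b₂, b₃, (1/c₁₂)·b₁∧b₂, (1/c₁₃)·b₁∧b₃, (1/c₂₃)·b₂∧b₃, (1/c₁₂₃)·b₁∧b₂∧b₃} is closed under multiplication. Then c₁₂, c₁₃ and c₂₃ each divide c₁₂₃. -/

import Mathlib

/-!
Evaluating the top-degree part of an element of `Λ` with the determinant relative to the basis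
`b` gives a `ℚ`-linear functional `φ` with `φ (b₁∧b₂∧b₃) = 1` that kills everything of degree
`< 3`. On the generators, and hence on the whole additive group they generate, `φ` takes values
in `(1/c₁₂₃)ℤ`. Closure under multiplication puts `(1/c₁₂) b₁∧b₂ · b₃ = (1/c₁₂) b₁∧b₂∧b₃` in
that group, so `1/c₁₂ ∈ (1/c₁₂₃)ℤ`, i.e. `c₁₂ ∣ c₁₂₃`; likewise for `c₁₃` and `c₂₃`.
-/

noncomputable section

/-- The exterior algebra `Λ_ℚ(ℚ³)`. -/
abbrev Lambda3 : Type := ExteriorAlgebra ℚ (Fin 3 → ℚ)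

/-- The generating set `{1, b₁, b₂, b₃, (1/c₁₂)b₁∧b₂, (1/c₁₃)b₁∧b₃, (1/c₂₃)b₂∧b₃,
(1/c₁₂₃)b₁∧b₂∧b₃}` in `Λ_ℚ(ℚ³)`, where the `bᵢ ∈ ℚ³` are viewed in `Λ` via `ι`. -/
def wSet (b : Fin 3 → (Fin 3 → ℚ)) (c12 c13 c23 c123 : ℕ) : Set Lambda3 :=
  {1, ExteriorAlgebra.ι ℚ (b 0), ExteriorAlgebra.ι ℚ (b 1), ExteriorAlgebra.ι ℚ (b 2),
   (c12 : ℚ)⁻¹ • (ExteriorAlgebra.ι ℚ (b 0) * ExteriorAlgebra.ι ℚ (b 1)),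
   (c13 : ℚ)⁻¹ • (ExteriorAlgebra.ι ℚ (b 0) * ExteriorAlgebra.ι ℚ (b 2)),
   (c23 : ℚ)⁻¹ • (ExteriorAlgebra.ι ℚ (b 1) * ExteriorAlgebra.ι ℚ (b 2)),
   (c123 : ℚ)⁻¹ •
     (ExteriorAlgebra.ι ℚ (b 0) * ExteriorAlgebra.ι ℚ (b 1) * ExteriorAlgebra.ι ℚ (b 2))}

namespace ExteriorAlgebra

variable {R M : Type*} [CommRing R] [AddCommGroup M] [Module R M]

def formEval {n : ℕ} (f : M [⋀^Fin n]→ₗ[R] R) : ExteriorAlgebra R M →ₗ[R] R :=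
  liftAlternating (Pi.single n f)

theorem formEval_ιMulti_self {n : ℕ} (f : M [⋀^Fin n]→ₗ[R] R) (v : Fin n → M) :
    formEval f (ιMulti R n v) = f v := by
  rw [formEval, liftAlternating_apply_ιMulti, Pi.single_eq_same]

theorem formEval_ιMulti_of_ne {m n : ℕ} (f : M [⋀^Fin n]→ₗ[R] R) (v : Fin m → M) (h : m ≠ n) :
    formEval f (ιMulti R m v) = 0 := by
  rw [formEval, liftAlternating_apply_ιMulti, Pi.single_eq_of_ne h, AlternatingMap.zero_apply]

theorem one_eq_ιMulti : (1 : ExteriorAlgebra R M) = ιMulti R 0 ![] :=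
  (ιMulti_zero_apply _).symm

theorem ι_eq_ιMulti (x : M) : ι R x = ιMulti R 1 ![x] := by
  simp [ιMulti_apply]

theorem ι_mul_ι_eq_ιMulti (x y : M) : ι R x * ι R y = ιMulti R 2 ![x, y] := by
  simp [ιMulti_apply]

theorem ι_mul_ι_mul_ι_eq_ιMulti (x y z : M) :
    ι R x * ι R y * ι R z = ιMulti R 3 ![x, y, z] := by
  simp [ιMulti_apply, mul_assoc]

theorem ι_mul_ι_comm (x y : M) : ι R y * ι R x = -(ι R x * ι R y) :=
  eq_neg_of_add_eq_zero_left (ι_add_mul_swap y x)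

end ExteriorAlgebra

theorem Nat.dvd_of_inv_mem_zmultiples_inv {c d : ℕ} (hc : 0 < c)
    (h : (c : ℚ)⁻¹ ∈ AddSubgroup.zmultiples (d : ℚ)⁻¹) : c ∣ d := by
  rcases Nat.eq_zero_or_pos d with rfl | hd
  · exact dvd_zero c
  obtain ⟨n, hn⟩ := AddSubgroup.mem_zmultiples_iff.mp h
  have hnc : n * c = (d : ℤ) := by
    rw [zsmul_eq_mul] at hn
    field_simp at hn
    exact_mod_cast hn
  exact Int.natCast_dvd_natCast.mp ⟨n, by rw [← hnc, mul_comm]⟩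

open ExteriorAlgebra

section

variable (B : Module.Basis (Fin 3) ℚ (Fin 3 → ℚ)) (c12 c13 c23 c123 : ℕ)

theorem formEval_det_ι_mul_ι_mul_ι :
    formEval B.det (ι ℚ (B 0) * ι ℚ (B 1) * ι ℚ (B 2)) = 1 := by
  rw [ι_mul_ι_mul_ι_eq_ιMulti, formEval_ιMulti_self, ← B.det_self]
  congr 1
  funext i
  fin_cases i <;> rfl

theorem formEval_det_mem_zmultiples_of_mem_closure {x : Lambda3}
    (hx : x ∈ AddSubgroup.closure (wSet B c12 c13 c23 c123)) :
    formEval B.det x ∈ AddSubgroup.zmultiples (c123 : ℚ)⁻¹ := by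
  refine (AddSubgroup.closure_le
    (K := (AddSubgroup.zmultiples (c123 : ℚ)⁻¹).comap (formEval B.det).toAddMonoidHom)).mpr
    ?_ hx
  rintro _ (rfl | rfl | rfl | rfl | rfl | rfl | rfl | rfl) <;>
    simp only [SetLike.mem_coe, AddSubgroup.mem_comap, LinearMap.toAddMonoidHom_coe, map_smul]
  all_goals first
    | rw [formEval_det_ι_mul_ι_mul_ι, smul_eq_mul, mul_one]; exact AddSubgroup.mem_zmultiples _
    | rw [ι_mul_ι_eq_ιMulti, formEval_ιMulti_of_ne _ _ (by decide), smul_zero]; exact zero_mem _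
    | rw [ι_eq_ιMulti, formEval_ιMulti_of_ne _ _ (by decide)]; exact zero_mem _
    | rw [one_eq_ιMulti, formEval_ιMulti_of_ne _ _ (by decide)]; exact zero_mem _

theorem dvd_of_smul_ι_mul_ι_mul_ι_mem_closure {c : ℕ} (hc : 0 < c)
    (h : (c : ℚ)⁻¹ • (ι ℚ (B 0) * ι ℚ (B 1) * ι ℚ (B 2)) ∈
      AddSubgroup.closure (wSet B c12 c13 c23 c123)) :
    c ∣ c123 := by
  refine Nat.dvd_of_inv_mem_zmultiples_inv hc ?_
  simpa [formEval_det_ι_mul_ι_mul_ι] using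
    formEval_det_mem_zmultiples_of_mem_closure B c12 c13 c23 c123 h

end

theorem stmt13_general (b : Fin 3 → (Fin 3 → ℚ))
    (hb_li : LinearIndependent ℚ b)
    (c12 c13 c23 c123 : ℕ)
    (h12 : 0 < c12) (h13 : 0 < c13) (h23 : 0 < c23)
    (hmul : ∀ u v : Lambda3,
      u ∈ AddSubgroup.closure (wSet b c12 c13 c23 c123) →
      v ∈ AddSubgroup.closure (wSet b c12 c13 c23 c123) →
      u * v ∈ AddSubgroup.closure (wSet b c12 c13 c23 c123)) :
    c12 ∣ c123 ∧ c13 ∣ c123 ∧ c23 ∣ c123 := by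
  obtain ⟨B, rfl⟩ : ∃ B : Module.Basis (Fin 3) ℚ (Fin 3 → ℚ), ⇑B = b :=
    ⟨_, coe_basisOfPiSpaceOfLinearIndependent hb_li⟩
  have hgen : ∀ x ∈ wSet B c12 c13 c23 c123, x ∈ AddSubgroup.closure (wSet B c12 c13 c23 c123) :=
    fun _ => (AddSubgroup.subset_closure ·)
  refine ⟨dvd_of_smul_ι_mul_ι_mul_ι_mem_closure B c12 c13 c23 c123 h12 ?_,
    dvd_of_smul_ι_mul_ι_mul_ι_mem_closure B c12 c13 c23 c123 h13 ?_,
    dvd_of_smul_ι_mul_ι_mul_ι_mem_closure B c12 c13 c23 c123 h23 ?_⟩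
  · rw [← smul_mul_assoc]
    exact hmul _ _ (hgen _ (by simp [wSet])) (hgen _ (by simp [wSet]))
  · have h := neg_mem (hmul _ _ (hgen ((c13 : ℚ)⁻¹ • (ι ℚ (B 0) * ι ℚ (B 2))) (by simp [wSet]))
      (hgen (ι ℚ (B 1)) (by simp [wSet])))
    rwa [smul_mul_assoc, mul_assoc, ι_mul_ι_comm, mul_neg, ← mul_assoc, smul_neg, neg_neg] at h
  · rw [mul_assoc, ← mul_smul_comm]
    exact hmul _ _ (hgen _ (by simp [wSet])) (hgen _ (by simp [wSet]))

/-- If `b₁, b₂, b₃` is a `ℚ`-basis of `ℚ³`, the `c`'s are positive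
integers, and the additive subgroup of `Λ_ℚ(ℚ³)` generated by
`{1, b₁, b₂, b₃, (1/c₁₂)b₁∧b₂, (1/c₁₃)b₁∧b₃, (1/c₂₃)b₂∧b₃, (1/c₁₂₃)b₁∧b₂∧b₃}` is closed
under multiplication, then `c₁₂, c₁₃, c₂₃` all divide `c₁₂₃`. -/
theorem stmt13 (b : Fin 3 → (Fin 3 → ℚ))
    (hb_li : LinearIndependent ℚ b)
    (hb_sp : Submodule.span ℚ (Set.range b) = ⊤)
    (c12 c13 c23 c123 : ℕ)
    (h12 : 0 < c12) (h13 : 0 < c13) (h23 : 0 < c23) (h123 : 0 < c123)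
    (hmul : ∀ u v : Lambda3,
      u ∈ AddSubgroup.closure (wSet b c12 c13 c23 c123) →
      v ∈ AddSubgroup.closure (wSet b c12 c13 c23 c123) →
      u * v ∈ AddSubgroup.closure (wSet b c12 c13 c23 c123)) :
    c12 ∣ c123 ∧ c13 ∣ c123 ∧ c23 ∣ c123 :=
  stmt13_general b hb_li c12 c13 c23 c123 h12 h13 h23 hmul

end
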